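/- arXiv:2408.07941 — 2 statements merged into one kernel-verified Lean document; each statement's English description precedes it below -/
import Mathlib

section
/- Let A be a real symmetric n×n matrix, u ∈ ℝ with uI − A positive definite, and w ∈ ℝⁿ. Suppose wᵀ(uI − A)⁻¹ w ≤ ε′ for some ε′ < 1. Then uI − A − w wᵀ is positive definite and Tr[(uI − A − w wᵀ)⁻¹] ≤ Tr[(uI − A)⁻¹] + (wᵀ(uI − A)⁻² w)/(1 − ε′). -/
/-!
With `M = uI − A` and `s = wᵀM⁻¹w < 1`, Cauchy–Schwarz for the inner product `xᵀMy` gives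
`(xᵀw)² ≤ (xᵀMx) s < xᵀMx`, so `M − wwᵀ` is positive definite. Sherman–Morrison gives
`(M − wwᵀ)⁻¹ = M⁻¹ + M⁻¹wwᵀM⁻¹ / (1 − s)`, whose trace is `Tr M⁻¹ + wᵀM⁻²w / (1 − s)`,
and `1 − s ≥ 1 − ε′ > 0`.
-/

open Matrix

variable {ι : Type*} [Fintype ι] [DecidableEq ι]

namespace Matrix

theorem inv_sub_vecMulVec {K : Type*} [Field K] {M : Matrix ι ι K} (hM : IsUnit M.det)
    (u v : ι → K) (h : v ⬝ᵥ M⁻¹ *ᵥ u ≠ 1) :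
    (M - vecMulVec u v)⁻¹ =
      M⁻¹ + (1 - v ⬝ᵥ M⁻¹ *ᵥ u)⁻¹ • vecMulVec (M⁻¹ *ᵥ u) (v ᵥ* M⁻¹) := by
  have hc : (1 - v ⬝ᵥ M⁻¹ *ᵥ u)⁻¹ * (1 - v ⬝ᵥ M⁻¹ *ᵥ u) = 1 :=
    inv_mul_cancel₀ (sub_ne_zero.mpr h.symm)
  refine inv_eq_right_inv ?_
  rw [Matrix.sub_mul, Matrix.mul_add, Matrix.mul_add, Matrix.mul_smul, Matrix.mul_smul,
    mul_nonsing_inv _ hM, mul_vecMulVec, mulVec_mulVec, mul_nonsing_inv _ hM, one_mulVec,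
    vecMulVec_mul, vecMulVec_mul_vecMulVec, vecMulVec_smul]
  linear_combination (norm := module) hc • vecMulVec u (v ᵥ* M⁻¹)

theorem trace_inv_sub_vecMulVec {K : Type*} [Field K] {M : Matrix ι ι K} (hM : IsUnit M.det)
    (u v : ι → K) (h : v ⬝ᵥ M⁻¹ *ᵥ u ≠ 1) :
    (M - vecMulVec u v)⁻¹.trace =
      M⁻¹.trace + v ⬝ᵥ (M⁻¹ ^ 2) *ᵥ u / (1 - v ⬝ᵥ M⁻¹ *ᵥ u) := by
  rw [inv_sub_vecMulVec hM u v h, trace_add, trace_smul, trace_vecMulVec,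
    dotProduct_comm (M⁻¹ *ᵥ u), ← dotProduct_mulVec, mulVec_mulVec, sq, smul_eq_mul, inv_mul_eq_div]

omit [DecidableEq ι] in
theorem PosSemidef.dotProduct_mulVec_sq_le {M : Matrix ι ι ℝ} (hM : M.PosSemidef)
    (x y : ι → ℝ) : (x ⬝ᵥ M *ᵥ y) ^ 2 ≤ (x ⬝ᵥ M *ᵥ x) * (y ⬝ᵥ M *ᵥ y) := by
  let := M.toSeminormedAddCommGroup hM
  let := M.toInnerProductSpace hM
  have h := real_inner_mul_inner_self_le x y
  change (M *ᵥ y) ⬝ᵥ x * ((M *ᵥ y) ⬝ᵥ x) ≤ (M *ᵥ x) ⬝ᵥ x * ((M *ᵥ y) ⬝ᵥ y) at h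
  simpa only [dotProduct_comm _ x, dotProduct_comm _ y, sq] using h

theorem PosDef.sq_dotProduct_le {M : Matrix ι ι ℝ} (hM : M.PosDef) (x w : ι → ℝ) :
    (x ⬝ᵥ w) ^ 2 ≤ (x ⬝ᵥ M *ᵥ x) * (w ⬝ᵥ M⁻¹ *ᵥ w) := by
  have hMM : M *ᵥ (M⁻¹ *ᵥ w) = w := by
    rw [mulVec_mulVec, mul_nonsing_inv _ ((isUnit_iff_isUnit_det M).mp hM.isUnit), one_mulVec]
  have h := hM.posSemidef.dotProduct_mulVec_sq_le x (M⁻¹ *ᵥ w)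
  rwa [hMM, dotProduct_comm (M⁻¹ *ᵥ w)] at h

theorem PosDef.sub_vecMulVec {M : Matrix ι ι ℝ} (hM : M.PosDef) {w : ι → ℝ}
    (hw : w ⬝ᵥ M⁻¹ *ᵥ w < 1) : (M - vecMulVec w w).PosDef := by
  have hW : (vecMulVec w w).IsHermitian := by
    simpa using (posSemidef_vecMulVec_self_star w).isHermitian
  refine posDef_iff_dotProduct_mulVec.mpr ⟨hM.isHermitian.sub hW, fun x hx => ?_⟩
  have hxMx : 0 < x ⬝ᵥ M *ᵥ x := by simpa using hM.dotProduct_mulVec_pos hx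
  have hxw : x ⬝ᵥ vecMulVec w w *ᵥ x = (x ⬝ᵥ w) ^ 2 := by
    rw [vecMulVec_mulVec, op_smul_eq_smul, dotProduct_smul, smul_eq_mul, dotProduct_comm w, sq]
  simp only [star_trivial, sub_mulVec, dotProduct_sub, hxw]
  nlinarith [hM.sq_dotProduct_le x w]

end Matrix

theorem upper_barrier_rank_one_update_general (n : ℕ) (A : Matrix (Fin n) (Fin n) ℝ)
    (u : ℝ) (hu : (u • 1 - A).PosDef)
    (w : Fin n → ℝ) (ε' : ℝ) (hε' : ε' < 1)
    (hw : w ⬝ᵥ ((u • 1 - A)⁻¹ *ᵥ w) ≤ ε') :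
    (u • 1 - A - vecMulVec w w).PosDef ∧
      ((u • 1 - A - vecMulVec w w)⁻¹).trace ≤
        ((u • 1 - A)⁻¹).trace + (w ⬝ᵥ (((u • 1 - A)⁻¹ ^ 2) *ᵥ w)) / (1 - ε') := by
  have hs : w ⬝ᵥ (u • 1 - A)⁻¹ *ᵥ w < 1 := hw.trans_lt hε'
  refine ⟨hu.sub_vecMulVec hs, ?_⟩
  rw [trace_inv_sub_vecMulVec ((isUnit_iff_isUnit_det _).mp hu.isUnit) w w hs.ne]
  gcongr
  simpa using (hu.inv.posSemidef.pow 2).dotProduct_mulVec_nonneg w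

/-- Upper-barrier rank-one update. If `uI − A` is positive definite and
`wᵀ(uI − A)⁻¹ w ≤ ε′ < 1`, then `uI − A − w wᵀ` is positive definite and
`Tr[(uI − A − w wᵀ)⁻¹] ≤ Tr[(uI − A)⁻¹] + wᵀ(uI − A)⁻² w / (1 − ε′)`. -/
theorem upper_barrier_rank_one_update (n : ℕ) (A : Matrix (Fin n) (Fin n) ℝ)
    (hA : A.IsSymm) (u : ℝ) (hu : (u • 1 - A).PosDef)
    (w : Fin n → ℝ) (ε' : ℝ) (hε' : ε' < 1)
    (hw : w ⬝ᵥ ((u • 1 - A)⁻¹ *ᵥ w) ≤ ε') :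
    (u • 1 - A - vecMulVec w w).PosDef ∧
      ((u • 1 - A - vecMulVec w w)⁻¹).trace ≤
        ((u • 1 - A)⁻¹).trace + (w ⬝ᵥ (((u • 1 - A)⁻¹ ^ 2) *ᵥ w)) / (1 - ε') :=
  upper_barrier_rank_one_update_general n A u hu w ε' hε' hw
end

section
/- Let A be a real symmetric n×n matrix, l ∈ ℝ with A − lI positive definite, and w ∈ ℝⁿ. Suppose wᵀ(A − lI)⁻¹ w ≤ ε′ for some ε′ ≥ 0. Then A + w wᵀ − lI is positive definite and Tr[(A + w wᵀ − lI)⁻¹] ≤ Tr[(A − lI)⁻¹] − (wᵀ(A − lI)⁻² w)/(1 + ε′). -/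
/-! By Sherman–Morrison, `Tr[(M + w wᵀ)⁻¹] = Tr[M⁻¹] − wᵀM⁻²w / (1 + wᵀM⁻¹w)` for `M = A − lI`;
both quadratic forms are nonnegative since `M⁻¹` is positive definite, so replacing `wᵀM⁻¹w` by
the larger `ε′` only weakens the subtracted term. -/

open Matrix

namespace Matrix

variable {n K : Type*} [Fintype n] [DecidableEq n] [Field K]

theorem inv_add_vecMulVec {M : Matrix n n K} (hM : IsUnit M) (u v : n → K)
    (h : 1 + v ⬝ᵥ (M⁻¹ *ᵥ u) ≠ 0) :
    (M + vecMulVec u v)⁻¹ =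
      M⁻¹ - (1 + v ⬝ᵥ (M⁻¹ *ᵥ u))⁻¹ • vecMulVec (M⁻¹ *ᵥ u) (v ᵥ* M⁻¹) := by
  set c := (1 + v ⬝ᵥ (M⁻¹ *ᵥ u))⁻¹
  have hc : c * (1 + v ⬝ᵥ (M⁻¹ *ᵥ u)) = 1 := inv_mul_cancel₀ h
  refine inv_eq_right_inv ?_
  have hMM : M * M⁻¹ = 1 := mul_nonsing_inv M ((isUnit_iff_isUnit_det M).mp hM)
  calc (M + vecMulVec u v) * (M⁻¹ - c • vecMulVec (M⁻¹ *ᵥ u) (v ᵥ* M⁻¹))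
      = 1 + (1 - c * (1 + v ⬝ᵥ (M⁻¹ *ᵥ u))) • vecMulVec u (v ᵥ* M⁻¹) := by
        rw [add_mul, mul_sub, mul_sub, hMM, Matrix.mul_smul, Matrix.mul_smul, mul_vecMulVec,
          mulVec_mulVec, hMM, one_mulVec, vecMulVec_mul, vecMulVec_mul_vecMulVec, vecMulVec_smul,
          smul_smul, mul_one_add, sub_smul, add_smul, one_smul]
        abel
    _ = 1 := by rw [hc, sub_self, zero_smul, add_zero]

theorem trace_inv_add_vecMulVec {M : Matrix n n K} (hM : IsUnit M) (u v : n → K)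
    (h : 1 + v ⬝ᵥ (M⁻¹ *ᵥ u) ≠ 0) :
    (M + vecMulVec u v)⁻¹.trace =
      M⁻¹.trace - v ⬝ᵥ ((M⁻¹ ^ 2) *ᵥ u) / (1 + v ⬝ᵥ (M⁻¹ *ᵥ u)) := by
  rw [inv_add_vecMulVec hM u v h, trace_sub, trace_smul, trace_vecMulVec,
    dotProduct_comm (M⁻¹ *ᵥ u), ← dotProduct_mulVec, mulVec_mulVec, sq, smul_eq_mul, inv_mul_eq_div]

end Matrix

theorem lower_barrier_rank_one_update_general (n : ℕ) (A : Matrix (Fin n) (Fin n) ℝ)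
    (l : ℝ) (hl : (A - l • 1).PosDef)
    (w : Fin n → ℝ) (ε' : ℝ)
    (hw : w ⬝ᵥ ((A - l • 1)⁻¹ *ᵥ w) ≤ ε') :
    (A + vecMulVec w w - l • 1).PosDef ∧
      ((A + vecMulVec w w - l • 1)⁻¹).trace ≤
        ((A - l • 1)⁻¹).trace - (w ⬝ᵥ (((A - l • 1)⁻¹ ^ 2) *ᵥ w)) / (1 + ε') := by
  rw [add_sub_right_comm]
  set M := A - l • 1
  have hs : 0 ≤ w ⬝ᵥ (M⁻¹ *ᵥ w) := by
    simpa using hl.inv.posSemidef.dotProduct_mulVec_nonneg w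
  have ht : 0 ≤ w ⬝ᵥ ((M⁻¹ ^ 2) *ᵥ w) := by
    simpa using (hl.inv.posSemidef.pow 2).dotProduct_mulVec_nonneg w
  refine ⟨hl.add_posSemidef (by simpa using posSemidef_vecMulVec_self_star w), ?_⟩
  rw [trace_inv_add_vecMulVec hl.isUnit w w (by positivity)]
  gcongr

/-- Lower-barrier rank-one update. If `A − lI` is positive definite and
`wᵀ(A − lI)⁻¹ w ≤ ε′` with `ε′ ≥ 0`, then `A + w wᵀ − lI` is positive definite and
`Tr[(A + w wᵀ − lI)⁻¹] ≤ Tr[(A − lI)⁻¹] − wᵀ(A − lI)⁻² w / (1 + ε′)`. -/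
theorem lower_barrier_rank_one_update (n : ℕ) (A : Matrix (Fin n) (Fin n) ℝ)
    (hA : A.IsSymm) (l : ℝ) (hl : (A - l • 1).PosDef)
    (w : Fin n → ℝ) (ε' : ℝ) (hε' : 0 ≤ ε')
    (hw : w ⬝ᵥ ((A - l • 1)⁻¹ *ᵥ w) ≤ ε') :
    (A + vecMulVec w w - l • 1).PosDef ∧
      ((A + vecMulVec w w - l • 1)⁻¹).trace ≤
        ((A - l • 1)⁻¹).trace - (w ⬝ᵥ (((A - l • 1)⁻¹ ^ 2) *ᵥ w)) / (1 + ε') :=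
  lower_barrier_rank_one_update_general n A l hl w ε' hw
end
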